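/- arXiv:1803.03228 — 2 statements merged into one kernel-verified Lean document; each statement's English description precedes it below -/
import Mathlib

section
/- Let ω = e^{2πi/3}, H the qutrit Hadamard with entries ω^{jk}/√3, S = diag(1, ω, 1), and Z = diag(1, ω, ω²). Then Z = H² S⁻¹ H² S. -/
/-!
Squaring the discrete Fourier transform gives the permutation matrix of `j ↦ -j`, because
`∑ₗ ω^(l(j+k))` is `3` when `3 ∣ j + k` and `0` otherwise. Conjugating the diagonal matrix `S⁻¹`
by that involution swaps its entries `1` and `2`, so `H² S⁻¹ H² S = diag(1, ω, ω⁻¹) = Z`.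
-/

noncomputable section
open Matrix

def ω : ℂ := Complex.exp (2 * Real.pi * Complex.I / 3)

def Hg : Matrix (Fin 3) (Fin 3) ℂ :=
  Matrix.of fun j k => ω ^ ((j : ℕ) * (k : ℕ)) / (Real.sqrt 3 : ℂ)

def Sg : Matrix (Fin 3) (Fin 3) ℂ := !![1, 0, 0; 0, ω, 0; 0, 0, 1]

def Zg : Matrix (Fin 3) (Fin 3) ℂ := !![1, 0, 0; 0, ω, 0; 0, 0, ω ^ 2]

theorem IsPrimitiveRoot.geom_sum_pow_eq_ite {R : Type*} [CommRing R] [IsDomain R] {ζ : R}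
    {n : ℕ} (hζ : IsPrimitiveRoot ζ n) (m : ℕ) :
    ∑ j ∈ Finset.range n, (ζ ^ m) ^ j = if n ∣ m then (n : R) else 0 := by
  split_ifs with hdvd
  · simp [(hζ.pow_eq_one_iff_dvd m).2 hdvd]
  · have hne : ζ ^ m - 1 ≠ 0 := sub_ne_zero.2 (mt (hζ.pow_eq_one_iff_dvd m).1 hdvd)
    refine (mul_eq_zero.1 ?_).resolve_right hne
    rw [geom_sum_mul, ← pow_mul, mul_comm, pow_mul, hζ.pow_eq_one, one_pow, sub_self]

theorem Fin.neg_eq_iff_dvd_val_add {n : ℕ} [NeZero n] (i k : Fin n) :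
    -i = k ↔ n ∣ (i : ℕ) + k := by
  rw [neg_eq_iff_add_eq_zero, Fin.ext_iff, Fin.val_add, Fin.val_zero, Nat.dvd_iff_mod_eq_zero]

theorem Matrix.permMatrix_mul_diagonal_mul_permMatrix_inv {ι R : Type*} [Fintype ι]
    [DecidableEq ι] [CommRing R] (σ : Equiv.Perm ι) (d : ι → R) :
    σ.permMatrix R * diagonal d * σ⁻¹.permMatrix R = diagonal (d ∘ σ) := by
  rw [PEquiv.toMatrix_toPEquiv_mul, PEquiv.mul_toMatrix_toPEquiv, submatrix_submatrix,
    Equiv.Perm.inv_def, Equiv.symm_symm, Function.id_comp, Function.comp_id,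
    submatrix_diagonal_equiv]

theorem Matrix.inv_diagonal_of_ne_zero {ι K : Type*} [Fintype ι] [DecidableEq ι] [Field K]
    {d : ι → K} (hd : ∀ i, d i ≠ 0) : (diagonal d)⁻¹ = diagonal fun i => (d i)⁻¹ :=
  inv_eq_left_inv <| by rw [diagonal_mul_diagonal]; simp [hd]

section DFT

variable {K : Type*} [Field K]

def dftMatrix (n : ℕ) (ζ c : K) : Matrix (Fin n) (Fin n) K :=
  of fun j k => ζ ^ ((j : ℕ) * (k : ℕ)) / c

theorem IsPrimitiveRoot.dftMatrix_sq {n : ℕ} [NeZero n] {ζ c : K} (hζ : IsPrimitiveRoot ζ n)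
    (hc : c * c = n) : dftMatrix n ζ c ^ 2 = (Equiv.neg (Fin n)).permMatrix K := by
  have hn : (n : K) ≠ 0 := hζ.neZero'.out
  ext i k
  calc (dftMatrix n ζ c ^ 2) i k
      = (∑ j ∈ Finset.range n, (ζ ^ ((i : ℕ) + k)) ^ j) / (c * c) := by
        rw [pow_two, mul_apply, Finset.sum_div, ← Fin.sum_univ_eq_sum_range
          (fun j => (ζ ^ ((i : ℕ) + k)) ^ j / (c * c))]
        refine Finset.sum_congr rfl fun j _ => ?_
        rw [dftMatrix, of_apply, of_apply, div_mul_div_comm, ← pow_add, ← pow_mul, add_mul,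
          mul_comm (j : ℕ) k]
    _ = (Equiv.neg (Fin n)).permMatrix K i k := by
        simp only [hζ.geom_sum_pow_eq_ite, hc, Equiv.Perm.permMatrix, PEquiv.toMatrix_apply,
          Equiv.toPEquiv_apply, Option.mem_def, Option.some_inj, Equiv.neg_apply,
          Fin.neg_eq_iff_dvd_val_add]
        split_ifs <;> simp [hn]

end DFT

theorem isPrimitiveRoot_ω : IsPrimitiveRoot ω 3 := by
  simpa [ω] using Complex.isPrimitiveRoot_exp 3 (by norm_num)

theorem Hg_sq : Hg ^ 2 = (Equiv.neg (Fin 3)).permMatrix ℂ :=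
  isPrimitiveRoot_ω.dftMatrix_sq (by norm_cast; simp)

theorem Z_eq_H2_Sinv_H2_S : Zg = Hg ^ 2 * Sg⁻¹ * Hg ^ 2 * Sg := by
  have hω : ω ≠ 0 := isPrimitiveRoot_ω.ne_zero (by norm_num)
  have hω_sq : ω ^ 2 = ω⁻¹ :=
    eq_inv_of_mul_eq_one_left (by rw [← pow_succ, isPrimitiveRoot_ω.pow_eq_one])
  have hS : Sg = diagonal ![1, ω, 1] := (diagonal_vec3 _ _ _).symm
  have hS_inv : Sg⁻¹ = diagonal ![1, ω⁻¹, 1] := by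
    rw [hS, inv_diagonal_of_ne_zero]
    · congr 1; ext i; fin_cases i <;> simp
    · intro i; fin_cases i <;> simp [hω]
  -- `j ↦ -j` is an involution, so the second `H²` is the inverse permutation matrix.
  have hH_sq' : Hg ^ 2 = (Equiv.neg (Fin 3))⁻¹.permMatrix ℂ := Hg_sq
  nth_rewrite 2 [hH_sq']
  rw [Hg_sq, hS_inv, permMatrix_mul_diagonal_mul_permMatrix_inv, hS, diagonal_mul_diagonal, Zg,
    ← diagonal_vec3]
  congr 1
  ext i
  fin_cases i <;> simp [hω_sq]
end
end

section
/- For an odd prime p, every element of SL(2, ℤ/p) with bottom-right entry d ≠ 0 equals Ĥ Ŝ^m Ĥ Ŝ^n Ĥ Ŝ^q where n = d, m = d⁻¹(1 − b), q = (c+1)d⁻¹, for the matrix [[a,b],[c,d]]. -/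
/-- Ŝ = [[1,0],[1,1]] -/
def Shat (p : ℕ) : Matrix (Fin 2) (Fin 2) (ZMod p) := !![1, 0; 1, 1]

/-- Ĥ = [[0,−1],[1,0]] -/
def Hhat (p : ℕ) : Matrix (Fin 2) (Fin 2) (ZMod p) := !![0, -1; 1, 0]

/-!
Writing `L x = !![1, 0; x, 1]`, a direct multiplication gives
`Ĥ L m Ĥ L n Ĥ L q = !![m + q (1 - m n), 1 - m n; n q - 1, n]`, and `Ŝ ^ k = L k`.
Matching this with `!![a, b; c, d]` forces `n = d`, `m = d⁻¹ (1 - b)`, `q = (c + 1) d⁻¹`;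
the top-left entry then agrees because `d⁻¹ (1 + b c) = a` is `a d - b c = 1`.
-/

open Matrix

section CommRing

variable {R : Type*} [CommRing R]

theorem lowerUnitriangular_one_pow (k : ℕ) :
    (!![1, 0; 1, 1] : Matrix (Fin 2) (Fin 2) R) ^ k = !![1, 0; (k : R), 1] := by
  induction k with
  | zero => simp [one_fin_two]
  | succ k ih =>
    rw [pow_succ, ih]
    ext i j
    fin_cases i <;> fin_cases j <;> simp [mul_apply, Fin.sum_univ_two]

theorem rot_mul_lower_mul_rot_mul_lower_mul_rot_mul_lower (m n q : R) :
    !![0, -1; 1, 0] * !![1, 0; m, 1] * !![0, -1; 1, 0] * !![1, 0; n, 1] *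
        !![0, -1; 1, 0] * !![1, 0; q, 1] =
      (!![m + q * (1 - m * n), 1 - m * n; n * q - 1, n] : Matrix (Fin 2) (Fin 2) R) := by
  simp only [mul_fin_two]
  ext i j
  fin_cases i <;> fin_cases j <;> simp <;> ring

end CommRing

theorem Shat_pow_val (p : ℕ) [NeZero p] (x : ZMod p) : Shat p ^ x.val = !![1, 0; x, 1] := by
  rw [Shat, lowerUnitriangular_one_pow, ZMod.natCast_zmod_val]

theorem eq_of_det_eq_one_of_apply_one_one_ne_zero {K : Type*} [Field K] (M : Matrix (Fin 2) (Fin 2) K)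
    (hdet : M.det = 1) (hd : M 1 1 ≠ 0) :
    let m := (M 1 1)⁻¹ * (1 - M 0 1)
    let n := M 1 1
    let q := (M 1 0 + 1) * (M 1 1)⁻¹
    M = !![m + q * (1 - m * n), 1 - m * n; n * q - 1, n] := by
  intro m n q
  rw [det_fin_two] at hdet
  ext i j
  fin_cases i <;> fin_cases j <;> simp [m, n, q] <;> field_simp <;> grind

theorem sl2_decomposition_d_ne_zero_general (p : ℕ) (hp : p.Prime)
    (M : Matrix (Fin 2) (Fin 2) (ZMod p)) (hdet : M.det = 1) (hd : M 1 1 ≠ 0) :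
    M = Hhat p * Shat p ^ ((M 1 1)⁻¹ * (1 - M 0 1)).val * Hhat p *
        Shat p ^ (M 1 1).val * Hhat p *
        Shat p ^ ((M 1 0 + 1) * (M 1 1)⁻¹).val := by
  have : Fact p.Prime := ⟨hp⟩
  rw [Shat_pow_val, Shat_pow_val, Shat_pow_val, Hhat,
    rot_mul_lower_mul_rot_mul_lower_mul_rot_mul_lower]
  exact eq_of_det_eq_one_of_apply_one_one_ne_zero M hdet hd

theorem sl2_decomposition_d_ne_zero (p : ℕ) (hp : p.Prime) (hodd : Odd p)
    (M : Matrix (Fin 2) (Fin 2) (ZMod p)) (hdet : M.det = 1) (hd : M 1 1 ≠ 0) :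
    M = Hhat p * Shat p ^ ((M 1 1)⁻¹ * (1 - M 0 1)).val * Hhat p *
        Shat p ^ (M 1 1).val * Hhat p *
        Shat p ^ ((M 1 0 + 1) * (M 1 1)⁻¹).val :=
  sl2_decomposition_d_ne_zero_general p hp M hdet hd
end
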